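/- Let u = (u₁,u₂,u₃) : ℝ³ → ℝ³ be a smooth displacement field. Then u satisfies the tetragonal universality constraints — ∂²u₁/∂x₁² = ∂²u₁/∂x₁∂x₂ = ∂²u₁/∂x₂² = ∂²u₁/∂x₃² = 0; ∂²u₂/∂x₁∂x₂ = ∂²u₂/∂x₂² = ∂²u₂/∂x₁² = ∂²u₂/∂x₃² = 0; ∂²u₁/∂x₁∂x₃ + ∂²u₂/∂x₂∂x₃ = 0; ∂²u₃/∂x₁∂x₃ = ∂²u₃/∂x₂∂x₃ = ∂²u₃/∂x₃² = 0; and ∂²u₃/∂x₁² + ∂²u₃/∂x₂² = 0, all identically on ℝ³ — if and only if there exist a constant real 3×3 matrix A, a vector b ∈ ℝ³, constants c₁, c₂, c₃ ∈ ℝ, and a smooth harmonic function g : ℝ² → ℝ such that u(x) = A x + b + (c₁ x₂x₃ + c₂ x₁x₃, −c₂ x₂x₃ + c₃ x₁x₃, g(x₁,x₂)) for all x ∈ ℝ³. -/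

import Mathlib

/-- Partial derivative of a scalar field on `ℝ³` in the `j`-th coordinate direction. -/
noncomputable def pd (j : Fin 3) (f : (Fin 3 → ℝ) → ℝ) : (Fin 3 → ℝ) → ℝ :=
  fun x => fderiv ℝ f x (Pi.single j 1)

/-- The `i`-th component of a vector field on `ℝ³`. -/
def comp (u : (Fin 3 → ℝ) → Fin 3 → ℝ) (i : Fin 3) : (Fin 3 → ℝ) → ℝ :=
  fun x => u x i

/-- Second partial derivative `∂²uᵢ/∂xⱼ∂xₖ` of the `i`-th component of `u`. -/
noncomputable def pdd (j k : Fin 3) (u : (Fin 3 → ℝ) → Fin 3 → ℝ) (i : Fin 3) :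
    (Fin 3 → ℝ) → ℝ :=
  pd j (pd k (comp u i))

/-- Partial derivative of a scalar field on `ℝ²` in the `j`-th coordinate direction. -/
noncomputable def pd2 (j : Fin 2) (f : (Fin 2 → ℝ) → ℝ) : (Fin 2 → ℝ) → ℝ :=
  fun x => fderiv ℝ f x (Pi.single j 1)

lemma topp : ((⊤:ℕ∞) : WithTop ℕ∞) + 1 ≤ ((⊤:ℕ∞) : WithTop ℕ∞) := by exact_mod_cast le_top
lemma topp1 : ((⊤:ℕ∞) : WithTop ℕ∞) ≠ 0 := by simp

lemma contDiff_pd {f : (Fin 3 → ℝ) → ℝ} (hf : ContDiff ℝ (⊤:ℕ∞) f) (j : Fin 3) :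
    ContDiff ℝ (⊤:ℕ∞) (pd j f) := by
  exact (ContinuousLinearMap.apply ℝ ℝ (Pi.single j 1)).contDiff.comp (hf.fderiv_right topp)

lemma pd_swap {f : (Fin 3 → ℝ) → ℝ} (hf : ContDiff ℝ (⊤:ℕ∞) f) (j k : Fin 3) (x : Fin 3 → ℝ) :
    pd j (pd k f) x = pd k (pd j f) x := by
  have hd : ∀ y, HasFDerivAt f (fderiv ℝ f y) y := fun y => (hf.differentiable topp1 y).hasFDerivAt
  have h2 : HasFDerivAt (fderiv ℝ f) (fderiv ℝ (fderiv ℝ f) x) x :=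
    ((hf.fderiv_right topp).differentiable topp1 x).hasFDerivAt
  have sym := second_derivative_symmetric hd h2
  have hk : HasFDerivAt (pd k f)
      ((ContinuousLinearMap.apply ℝ ℝ (Pi.single k 1)).comp (fderiv ℝ (fderiv ℝ f) x)) x := by
    have h := ((ContinuousLinearMap.apply ℝ ℝ (Pi.single k 1)).hasFDerivAt
      (x := fderiv ℝ f x)).comp x h2
    exact h
  have hj : HasFDerivAt (pd j f)
      ((ContinuousLinearMap.apply ℝ ℝ (Pi.single j 1)).comp (fderiv ℝ (fderiv ℝ f) x)) x := by
    have h := ((ContinuousLinearMap.apply ℝ ℝ (Pi.single j 1)).hasFDerivAt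
      (x := fderiv ℝ f x)).comp x h2
    exact h
  show fderiv ℝ (pd k f) x _ = fderiv ℝ (pd j f) x _
  rw [hk.fderiv, hj.fderiv]
  exact sym _ _

lemma basis_expand (v : Fin 3 → ℝ) :
    v = ∑ j : Fin 3, v j • (Pi.single j 1 : Fin 3 → ℝ) := by
  funext i
  simp [Finset.sum_apply, Pi.single_apply]

lemma fderiv_eq_zero_of_pd {f : (Fin 3 → ℝ) → ℝ} (z : Fin 3 → ℝ)
    (h : ∀ j, pd j f z = 0) : fderiv ℝ f z = 0 := by
  ext v
  conv_lhs => rw [basis_expand v]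
  simp only [map_sum, map_smul]
  have : ∀ j : Fin 3, fderiv ℝ f z (Pi.single j 1) = 0 := fun j => h j
  simp [this]

lemma const_of_pd_zero {f : (Fin 3 → ℝ) → ℝ} (hf : Differentiable ℝ f)
    (h : ∀ j x, pd j f x = 0) : ∀ x, f x = f 0 := fun x =>
  is_const_of_fderiv_eq_zero hf (fun z => fderiv_eq_zero_of_pd z (fun j => h j z)) x 0

lemma eq_of_pd_eq {f g : (Fin 3 → ℝ) → ℝ} (hf : Differentiable ℝ f) (hg : Differentiable ℝ g)
    (h0 : f 0 = g 0) (h : ∀ j x, pd j f x = pd j g x) : ∀ x, f x = g x := by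
  have hd : Differentiable ℝ (fun x => f x - g x) := hf.sub hg
  have hz : ∀ j x, pd j (fun x => f x - g x) x = 0 := by
    intro j x
    have : fderiv ℝ (fun x => f x - g x) x = fderiv ℝ f x - fderiv ℝ g x :=
      fderiv_sub (hf x) (hg x)
    simp only [pd, this, ContinuousLinearMap.sub_apply]
    have := h j x
    simp only [pd] at this
    rw [this, sub_self]
  intro x
  have := const_of_pd_zero hd hz x
  simp only [h0, sub_self] at this
  linarith [this]

/-- master polynomial shape -/
def P3 (a : ℝ) (w : Fin 3 → ℝ) (q : Fin 2 → ℝ) : (Fin 3 → ℝ) → ℝ :=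
  fun x => a + (w 0 * x 0 + w 1 * x 1 + w 2 * x 2) + (q 0 * (x 1 * x 2) + q 1 * (x 0 * x 2))

lemma hasFDerivAt_P3 (a : ℝ) (w : Fin 3 → ℝ) (q : Fin 2 → ℝ) (x : Fin 3 → ℝ) :
    HasFDerivAt (P3 a w q)
      ((0 : (Fin 3 → ℝ) →L[ℝ] ℝ) + (w 0 • ContinuousLinearMap.proj 0 +
        w 1 • ContinuousLinearMap.proj 1 + w 2 • ContinuousLinearMap.proj 2) +
       (q 0 • (x 1 • (ContinuousLinearMap.proj 2) + x 2 • (ContinuousLinearMap.proj 1)) +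
        q 1 • (x 0 • (ContinuousLinearMap.proj 2) + x 2 • (ContinuousLinearMap.proj 0)))) x := by
  have h0 : HasFDerivAt (fun x : Fin 3 → ℝ => x 0)
      (ContinuousLinearMap.proj (R := ℝ) (φ := fun _ : Fin 3 => ℝ) 0) x :=
    hasFDerivAt_apply 0 x
  have h1 : HasFDerivAt (fun x : Fin 3 → ℝ => x 1)
      (ContinuousLinearMap.proj (R := ℝ) (φ := fun _ : Fin 3 => ℝ) 1) x :=
    hasFDerivAt_apply 1 x
  have h2 : HasFDerivAt (fun x : Fin 3 → ℝ => x 2)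
      (ContinuousLinearMap.proj (R := ℝ) (φ := fun _ : Fin 3 => ℝ) 2) x :=
    hasFDerivAt_apply 2 x
  exact ((hasFDerivAt_const a x).add
      (((h0.const_mul (w 0)).add (h1.const_mul (w 1))).add (h2.const_mul (w 2)))).add
    (((h1.mul h2).const_mul (q 0)).add ((h0.mul h2).const_mul (q 1)))

lemma differentiable_P3 (a : ℝ) (w : Fin 3 → ℝ) (q : Fin 2 → ℝ) :
    Differentiable ℝ (P3 a w q) := fun x => (hasFDerivAt_P3 a w q x).differentiableAt

lemma pd_P3_0 (a : ℝ) (w : Fin 3 → ℝ) (q : Fin 2 → ℝ) :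
    pd 0 (P3 a w q) = P3 (w 0) ![0,0,q 1] ![0,0] := by
  funext x
  simp only [pd, (hasFDerivAt_P3 a w q x).fderiv]
  simp [ContinuousLinearMap.proj_apply, Pi.single_apply, P3]
  try ring

lemma pd_P3_1 (a : ℝ) (w : Fin 3 → ℝ) (q : Fin 2 → ℝ) :
    pd 1 (P3 a w q) = P3 (w 1) ![0,0,q 0] ![0,0] := by
  funext x
  simp only [pd, (hasFDerivAt_P3 a w q x).fderiv]
  simp [ContinuousLinearMap.proj_apply, Pi.single_apply, P3]
  try ring

lemma pd_P3_2 (a : ℝ) (w : Fin 3 → ℝ) (q : Fin 2 → ℝ) :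
    pd 2 (P3 a w q) = P3 (w 2) ![q 1, q 0, 0] ![0,0] := by
  funext x
  simp only [pd, (hasFDerivAt_P3 a w q x).fderiv]
  simp [ContinuousLinearMap.proj_apply, Pi.single_apply, P3]
  try ring

lemma pd_const (j : Fin 3) (c : ℝ) : pd j (fun _ => c) = fun _ => 0 := by
  funext x
  simp [pd, fderiv_const]

lemma pd_add {f g : (Fin 3 → ℝ) → ℝ} (hf : Differentiable ℝ f) (hg : Differentiable ℝ g)
    (j : Fin 3) : pd j (fun x => f x + g x) = fun x => pd j f x + pd j g x := by
  funext x
  simp only [pd, fderiv_fun_add (hf x) (hg x), ContinuousLinearMap.add_apply]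

lemma contDiff_pd2 {f : (Fin 2 → ℝ) → ℝ} (hf : ContDiff ℝ (⊤:ℕ∞) f) (j : Fin 2) :
    ContDiff ℝ (⊤:ℕ∞) (pd2 j f) := by
  exact (ContinuousLinearMap.apply ℝ ℝ (Pi.single j 1)).contDiff.comp (hf.fderiv_right topp)

/-- chain rule: pd of g ∘ T for T linear ℝ³ → ℝ² -/
lemma pd_comp32 {g : (Fin 2 → ℝ) → ℝ} (hg : Differentiable ℝ g)
    (T : (Fin 3 → ℝ) →L[ℝ] (Fin 2 → ℝ)) (j : Fin 3) :
    pd j (fun x => g (T x)) = fun x => fderiv ℝ g (T x) (T (Pi.single j 1)) := by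
  funext x
  have h : HasFDerivAt (fun x => g (T x)) ((fderiv ℝ g (T x)).comp T) x := by
    have := ((hg (T x)).hasFDerivAt).comp x T.hasFDerivAt
    exact this
  simp only [pd, h.fderiv, ContinuousLinearMap.comp_apply]

lemma pd2_comp23 {f : (Fin 3 → ℝ) → ℝ} (hf : Differentiable ℝ f)
    (S : (Fin 2 → ℝ) →L[ℝ] (Fin 3 → ℝ)) (j : Fin 2) :
    pd2 j (fun p => f (S p)) = fun p => fderiv ℝ f (S p) (S (Pi.single j 1)) := by
  funext p
  have h : HasFDerivAt (fun p => f (S p)) ((fderiv ℝ f (S p)).comp S) p := by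
    have := ((hf (S p)).hasFDerivAt).comp p S.hasFDerivAt
    exact this
  simp only [pd2, h.fderiv, ContinuousLinearMap.comp_apply]

/-- inclusion ℝ² → ℝ³ -/
noncomputable def iota : (Fin 2 → ℝ) →L[ℝ] (Fin 3 → ℝ) :=
  ContinuousLinearMap.pi ![ContinuousLinearMap.proj 0, ContinuousLinearMap.proj 1, 0]

lemma iota_apply (p : Fin 2 → ℝ) : iota p = ![p 0, p 1, 0] := by
  funext i
  fin_cases i <;> simp [iota, ContinuousLinearMap.pi_apply]

/-- projection ℝ³ → ℝ² -/
noncomputable def pi32 : (Fin 3 → ℝ) →L[ℝ] (Fin 2 → ℝ) :=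
  ContinuousLinearMap.pi ![ContinuousLinearMap.proj 0, ContinuousLinearMap.proj 1]

lemma pi32_apply (x : Fin 3 → ℝ) : pi32 x = ![x 0, x 1] := by
  funext i
  fin_cases i <;> simp [pi32, ContinuousLinearMap.pi_apply]

lemma iota_single0 : iota (Pi.single 0 1) = Pi.single 0 1 := by
  rw [iota_apply]; funext i; fin_cases i <;> simp [Pi.single_apply]

lemma iota_single1 : iota (Pi.single 1 1) = Pi.single 1 1 := by
  rw [iota_apply]; funext i; fin_cases i <;> simp [Pi.single_apply]

lemma pi32_single0 : pi32 (Pi.single 0 1) = Pi.single 0 1 := by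
  rw [pi32_apply]; funext i; fin_cases i <;> simp [Pi.single_apply]

lemma pi32_single1 : pi32 (Pi.single 1 1) = Pi.single 1 1 := by
  rw [pi32_apply]; funext i; fin_cases i <;> simp [Pi.single_apply]

lemma pi32_single2 : pi32 (Pi.single 2 1) = 0 := by
  rw [pi32_apply]; funext i; fin_cases i <;> simp [Pi.single_apply]

lemma P3_zero (a : ℝ) (w : Fin 3 → ℝ) (q : Fin 2 → ℝ) : P3 a w q 0 = a := by
  simp [P3]

lemma rep0 {f : (Fin 3 → ℝ) → ℝ} (hf : ContDiff ℝ (⊤:ℕ∞) f)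
    (h00 : ∀ x, pd 0 (pd 0 f) x = 0) (h01 : ∀ x, pd 0 (pd 1 f) x = 0)
    (h11 : ∀ x, pd 1 (pd 1 f) x = 0) (h22 : ∀ x, pd 2 (pd 2 f) x = 0) :
    (∀ x, pd 0 (pd 2 f) x = pd 0 (pd 2 f) 0) ∧
    (∀ x, pd 1 (pd 2 f) x = pd 1 (pd 2 f) 0) ∧
    (∀ x, f x = P3 (f 0) ![pd 0 f 0, pd 1 f 0, pd 2 f 0]
      ![pd 1 (pd 2 f) 0, pd 0 (pd 2 f) 0] x) := by
  have hf0 := contDiff_pd hf 0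
  have hf1 := contDiff_pd hf 1
  have hf2 := contDiff_pd hf 2
  have e00 : pd 0 (pd 0 f) = fun _ => 0 := funext h00
  have e01 : pd 0 (pd 1 f) = fun _ => 0 := funext h01
  have e10 : pd 1 (pd 0 f) = fun _ => 0 := by
    funext x; rw [pd_swap hf 1 0]; exact h01 x
  have e11 : pd 1 (pd 1 f) = fun _ => 0 := funext h11
  have e22 : pd 2 (pd 2 f) = fun _ => 0 := funext h22
  have s02 : pd 0 (pd 2 f) = pd 2 (pd 0 f) := funext (pd_swap hf 0 2)
  have s12 : pd 1 (pd 2 f) = pd 2 (pd 1 f) := funext (pd_swap hf 1 2)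
  -- constancy of the two free second derivatives
  have hq1 : ∀ x, pd 0 (pd 2 f) x = pd 0 (pd 2 f) 0 := by
    apply const_of_pd_zero ((contDiff_pd (contDiff_pd hf 2) 0).differentiable topp1)
    intro j x
    fin_cases j
    · show pd 0 (pd 0 (pd 2 f)) x = 0
      rw [s02, pd_swap hf0 0 2, e00, pd_const]
    · show pd 1 (pd 0 (pd 2 f)) x = 0
      rw [s02, pd_swap hf0 1 2, e10, pd_const]
    · show pd 2 (pd 0 (pd 2 f)) x = 0
      rw [pd_swap hf2 2 0, e22, pd_const]
  have hq0 : ∀ x, pd 1 (pd 2 f) x = pd 1 (pd 2 f) 0 := by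
    apply const_of_pd_zero ((contDiff_pd (contDiff_pd hf 2) 1).differentiable topp1)
    intro j x
    fin_cases j
    · show pd 0 (pd 1 (pd 2 f)) x = 0
      rw [s12, pd_swap hf1 0 2, e01, pd_const]
    · show pd 1 (pd 1 (pd 2 f)) x = 0
      rw [s12, pd_swap hf1 1 2, e11, pd_const]
    · show pd 2 (pd 1 (pd 2 f)) x = 0
      rw [pd_swap hf2 2 1, e22, pd_const]
  refine ⟨hq1, hq0, ?_⟩
  set q1 := pd 0 (pd 2 f) 0 with hq1def
  set q0 := pd 1 (pd 2 f) 0 with hq0def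
  -- closed forms for the first derivatives
  have hpd0 : ∀ x, pd 0 f x = P3 (pd 0 f 0) ![0,0,q1] ![0,0] x := by
    apply eq_of_pd_eq (hf0.differentiable topp1) (differentiable_P3 _ _ _)
    · rw [P3_zero]
    · intro j x
      fin_cases j
      · show pd 0 (pd 0 f) x = pd 0 (P3 _ _ _) x
        rw [pd_P3_0, e00]; simp [P3]
      · show pd 1 (pd 0 f) x = pd 1 (P3 _ _ _) x
        rw [pd_P3_1, e10]; simp [P3]
      · show pd 2 (pd 0 f) x = pd 2 (P3 _ _ _) x
        rw [pd_P3_2, ← s02, hq1 x]; simp [P3]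
  have hpd1 : ∀ x, pd 1 f x = P3 (pd 1 f 0) ![0,0,q0] ![0,0] x := by
    apply eq_of_pd_eq (hf1.differentiable topp1) (differentiable_P3 _ _ _)
    · rw [P3_zero]
    · intro j x
      fin_cases j
      · show pd 0 (pd 1 f) x = pd 0 (P3 _ _ _) x
        rw [pd_P3_0, e01]; simp [P3]
      · show pd 1 (pd 1 f) x = pd 1 (P3 _ _ _) x
        rw [pd_P3_1, e11]; simp [P3]
      · show pd 2 (pd 1 f) x = pd 2 (P3 _ _ _) x
        rw [pd_P3_2, ← s12, hq0 x]; simp [P3]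
  have hpd2 : ∀ x, pd 2 f x = P3 (pd 2 f 0) ![q1,q0,0] ![0,0] x := by
    apply eq_of_pd_eq (hf2.differentiable topp1) (differentiable_P3 _ _ _)
    · rw [P3_zero]
    · intro j x
      fin_cases j
      · show pd 0 (pd 2 f) x = pd 0 (P3 _ _ _) x
        rw [pd_P3_0, hq1 x]; simp [P3]
      · show pd 1 (pd 2 f) x = pd 1 (P3 _ _ _) x
        rw [pd_P3_1, hq0 x]; simp [P3]
      · show pd 2 (pd 2 f) x = pd 2 (P3 _ _ _) x
        rw [pd_P3_2, e22]; simp [P3]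
  -- final representation
  apply eq_of_pd_eq (hf.differentiable topp1) (differentiable_P3 _ _ _)
  · rw [P3_zero]
  · intro j x
    fin_cases j
    · show pd 0 f x = pd 0 (P3 _ _ _) x
      rw [pd_P3_0, hpd0 x]; simp [P3]
    · show pd 1 f x = pd 1 (P3 _ _ _) x
      rw [pd_P3_1, hpd1 x]; simp [P3]
    · show pd 2 f x = pd 2 (P3 _ _ _) x
      rw [pd_P3_2, hpd2 x]; simp [P3]

lemma rep2 {f : (Fin 3 → ℝ) → ℝ} (hf : ContDiff ℝ (⊤:ℕ∞) f)
    (h02 : ∀ x, pd 0 (pd 2 f) x = 0) (h12 : ∀ x, pd 1 (pd 2 f) x = 0)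
    (h22 : ∀ x, pd 2 (pd 2 f) x = 0) :
    ∀ x, f x = pd 2 f 0 * x 2 + f ![x 0, x 1, 0] := by
  have hfd : Differentiable ℝ f := hf.differentiable topp1
  have ha : ∀ x, pd 2 f x = pd 2 f 0 := by
    apply const_of_pd_zero ((contDiff_pd hf 2).differentiable topp1)
    intro j x
    fin_cases j
    · exact h02 x
    · exact h12 x
    · exact h22 x
  set a := pd 2 f 0 with hadef
  intro x
  set c : ℝ → Fin 3 → ℝ := fun t => ![x 0, x 1, 0] + t • (Pi.single 2 1 : Fin 3 → ℝ) with hcdef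
  have hc : ∀ t, HasDerivAt c (Pi.single 2 1 : Fin 3 → ℝ) t := by
    intro t
    have h1 : HasDerivAt (fun t : ℝ => t • (Pi.single 2 1 : Fin 3 → ℝ))
        (Pi.single 2 1 : Fin 3 → ℝ) t := by
      simpa using (hasDerivAt_id t).smul_const (Pi.single 2 1 : Fin 3 → ℝ)
    exact h1.const_add _
  have hφ : ∀ t, HasDerivAt (fun t => f (c t)) (pd 2 f (c t)) t := by
    intro t
    have := (hfd (c t)).hasFDerivAt.comp_hasDerivAt t (hc t)
    exact this
  have hψ : ∀ t, HasDerivAt (fun t => f (c t) - a * t) 0 t := by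
    intro t
    have h2 : HasDerivAt (fun t : ℝ => a * t) a t := by
      simpa using (hasDerivAt_id t).const_mul a
    have := (hφ t).fun_sub h2
    rw [ha (c t)] at this
    simpa using this
  have hconst : (fun t => f (c t) - a * t) (x 2) = (fun t => f (c t) - a * t) 0 :=
    is_const_of_deriv_eq_zero (fun t => (hψ t).differentiableAt)
      (fun t => (hψ t).deriv) _ _
  have hcx : c (x 2) = x := by
    funext i
    fin_cases i <;>
      simp [hcdef, Pi.single_apply, Pi.smul_apply, smul_eq_mul,
        Matrix.vecHead, Matrix.vecTail]
  have hc0 : c 0 = ![x 0, x 1, 0] := by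
    funext i
    fin_cases i <;>
      simp [hcdef, Pi.single_apply, Pi.smul_apply, smul_eq_mul,
        Matrix.vecHead, Matrix.vecTail]
  simp only [hcx, hc0, mul_zero, sub_zero] at hconst
  linarith [hconst]

lemma pd2_iota {f : (Fin 3 → ℝ) → ℝ} (hf : Differentiable ℝ f)
    (j2 : Fin 2) (j3 : Fin 3) (hj : iota (Pi.single j2 1) = Pi.single j3 1) :
    pd2 j2 (fun p => f (iota p)) = fun p => pd j3 f (iota p) := by
  rw [pd2_comp23 hf iota j2, hj]
  rfl

lemma pd_pi32 {g : (Fin 2 → ℝ) → ℝ} (hg : Differentiable ℝ g)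
    (j3 : Fin 3) (j2 : Fin 2) (hj : pi32 (Pi.single j3 1) = Pi.single j2 1) :
    pd j3 (fun x => g (pi32 x)) = fun x => pd2 j2 g (pi32 x) := by
  rw [pd_comp32 hg pi32 j3, hj]
  rfl

lemma pd_pi32_2 {g : (Fin 2 → ℝ) → ℝ} (hg : Differentiable ℝ g) :
    pd 2 (fun x => g (pi32 x)) = fun _ => 0 := by
  rw [pd_comp32 hg pi32 2, pi32_single2]
  funext x
  simp

/-- A smooth displacement field `u : ℝ³ → ℝ³` satisfies the tetragonal universality
constraints if and only if it is the superposition of a homogeneous displacement field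
and the inhomogeneous field `(c₁x₂x₃ + c₂x₁x₃, −c₂x₂x₃ + c₃x₁x₃, g(x₁,x₂))` with `g`
a smooth harmonic function of two variables. -/
theorem tetragonal_universal_displacements
    (u : (Fin 3 → ℝ) → Fin 3 → ℝ) (hu : ContDiff ℝ (⊤ : ℕ∞) u) :
    ((∀ x, pdd 0 0 u 0 x = 0) ∧ (∀ x, pdd 0 1 u 0 x = 0) ∧
     (∀ x, pdd 1 1 u 0 x = 0) ∧ (∀ x, pdd 2 2 u 0 x = 0) ∧
     (∀ x, pdd 0 1 u 1 x = 0) ∧ (∀ x, pdd 1 1 u 1 x = 0) ∧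
     (∀ x, pdd 0 0 u 1 x = 0) ∧ (∀ x, pdd 2 2 u 1 x = 0) ∧
     (∀ x, pdd 0 2 u 0 x + pdd 1 2 u 1 x = 0) ∧
     (∀ x, pdd 0 2 u 2 x = 0) ∧ (∀ x, pdd 1 2 u 2 x = 0) ∧ (∀ x, pdd 2 2 u 2 x = 0) ∧
     (∀ x, pdd 0 0 u 2 x + pdd 1 1 u 2 x = 0)) ↔
    ∃ (A : Matrix (Fin 3) (Fin 3) ℝ) (b : Fin 3 → ℝ) (c₁ c₂ c₃ : ℝ)
      (g : (Fin 2 → ℝ) → ℝ),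
      ContDiff ℝ (⊤ : ℕ∞) g ∧
      (∀ p, pd2 0 (pd2 0 g) p + pd2 1 (pd2 1 g) p = 0) ∧
      ∀ x, u x = A.mulVec x + b +
        ![c₁ * (x 1 * x 2) + c₂ * (x 0 * x 2),
          -(c₂ * (x 1 * x 2)) + c₃ * (x 0 * x 2),
          g ![x 0, x 1]] := by
  constructor
  · intro H
    obtain ⟨h1, h2, h3, h4, h5, h6, h7, h8, h9, h10, h11, h12, h13⟩ := H
    have hf0 : ContDiff ℝ (⊤:ℕ∞) (comp u 0) := contDiff_pi.mp hu 0
    have hf1 : ContDiff ℝ (⊤:ℕ∞) (comp u 1) := contDiff_pi.mp hu 1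
    have hf2 : ContDiff ℝ (⊤:ℕ∞) (comp u 2) := contDiff_pi.mp hu 2
    obtain ⟨hq1A, hq0A, hrep0⟩ := rep0 hf0 h1 h2 h3 h4
    obtain ⟨hq1B, hq0B, hrep1⟩ := rep0 hf1 h7 h5 h6 h8
    have hrep2 := rep2 hf2 h10 h11 h12
    set a := pd 2 (comp u 2) 0 with hadef
    refine ⟨!![pd 0 (comp u 0) 0, pd 1 (comp u 0) 0, pd 2 (comp u 0) 0;
               pd 0 (comp u 1) 0, pd 1 (comp u 1) 0, pd 2 (comp u 1) 0;
               0, 0, a],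
            ![comp u 0 0, comp u 1 0, 0],
            pd 1 (pd 2 (comp u 0)) 0, pd 0 (pd 2 (comp u 0)) 0,
            pd 0 (pd 2 (comp u 1)) 0,
            fun p => comp u 2 (iota p), ?_, ?_, ?_⟩
    · exact hf2.comp iota.contDiff
    · intro p
      have e0 : pd2 0 (fun p => comp u 2 (iota p)) = fun p => pd 0 (comp u 2) (iota p) :=
        pd2_iota (hf2.differentiable topp1) 0 0 iota_single0
      have e1 : pd2 1 (fun p => comp u 2 (iota p)) = fun p => pd 1 (comp u 2) (iota p) :=
        pd2_iota (hf2.differentiable topp1) 1 1 iota_single1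
      rw [e0, e1,
        pd2_iota ((contDiff_pd hf2 0).differentiable topp1) 0 0 iota_single0,
        pd2_iota ((contDiff_pd hf2 1).differentiable topp1) 1 1 iota_single1]
      exact h13 (iota p)
    · intro x
      have hneg : pd 1 (pd 2 (comp u 1)) 0 = -(pd 0 (pd 2 (comp u 0)) 0) := by
        have h9' : pd 0 (pd 2 (comp u 0)) 0 + pd 1 (pd 2 (comp u 1)) 0 = 0 := h9 0
        linarith
      funext i
      fin_cases i
      · refine (hrep0 x).trans ?_
        simp [P3, Matrix.mulVec, dotProduct, Fin.sum_univ_three]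
        ring
      · refine ((hrep1 x).trans ?_)
        rw [hneg]
        simp [P3, Matrix.mulVec, dotProduct, Fin.sum_univ_three]
        try ring
      · refine ((hrep2 x).trans ?_)
        simp [Matrix.mulVec, dotProduct, Fin.sum_univ_three, iota_apply]
        try ring

  · rintro ⟨A, b, c₁, c₂, c₃, g, hg, hharm, hrep⟩
    have hgd : Differentiable ℝ g := hg.differentiable topp1
    have hc0 : comp u 0 = P3 (b 0) ![A 0 0, A 0 1, A 0 2] ![c₁, c₂] := by
      funext x
      show u x 0 = _
      rw [hrep x]
      simp [Matrix.mulVec, dotProduct, Fin.sum_univ_three, P3]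
      ring
    have hc1 : comp u 1 = P3 (b 1) ![A 1 0, A 1 1, A 1 2] ![-c₂, c₃] := by
      funext x
      show u x 1 = _
      rw [hrep x]
      simp [Matrix.mulVec, dotProduct, Fin.sum_univ_three, P3]
      ring
    have hc2 : comp u 2 = fun x => P3 (b 2) ![A 2 0, A 2 1, A 2 2] ![0,0] x + g (pi32 x) := by
      funext x
      show u x 2 = _
      rw [hrep x]
      simp [Matrix.mulVec, dotProduct, Fin.sum_univ_three, P3, pi32_apply]
      ring
    have hP3d := differentiable_P3 (b 2) ![A 2 0, A 2 1, A 2 2] ![0,0]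
    have hgπd : Differentiable ℝ (fun x => g (pi32 x)) := hgd.comp pi32.differentiable
    have hpd2f2 : pd 2 (comp u 2) = fun _ => A 2 2 := by
      rw [hc2, pd_add hP3d hgπd 2, pd_P3_2, pd_pi32_2 hgd]
      funext x; simp [P3]
    have hd20 : Differentiable ℝ (fun x => pd2 0 g (pi32 x)) :=
      ((contDiff_pd2 hg 0).differentiable topp1).comp pi32.differentiable
    have hd21 : Differentiable ℝ (fun x => pd2 1 g (pi32 x)) :=
      ((contDiff_pd2 hg 1).differentiable topp1).comp pi32.differentiable
    have hpd0f2 : pd 0 (comp u 2) = fun x => A 2 0 + pd2 0 g (pi32 x) := by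
      rw [hc2, pd_add hP3d hgπd 0, pd_P3_0, pd_pi32 hgd 0 0 pi32_single0]
      funext x; simp [P3]
    have hpd1f2 : pd 1 (comp u 2) = fun x => A 2 1 + pd2 1 g (pi32 x) := by
      rw [hc2, pd_add hP3d hgπd 1, pd_P3_1, pd_pi32 hgd 1 1 pi32_single1]
      funext x; simp [P3]
    refine ⟨?_, ?_, ?_, ?_, ?_, ?_, ?_, ?_, ?_, ?_, ?_, ?_, ?_⟩
    · intro x; show pd 0 (pd 0 (comp u 0)) x = 0
      rw [hc0, pd_P3_0, pd_P3_0]; simp [P3]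
    · intro x; show pd 0 (pd 1 (comp u 0)) x = 0
      rw [hc0, pd_P3_1, pd_P3_0]; simp [P3]
    · intro x; show pd 1 (pd 1 (comp u 0)) x = 0
      rw [hc0, pd_P3_1, pd_P3_1]; simp [P3]
    · intro x; show pd 2 (pd 2 (comp u 0)) x = 0
      rw [hc0, pd_P3_2, pd_P3_2]; simp [P3]
    · intro x; show pd 0 (pd 1 (comp u 1)) x = 0
      rw [hc1, pd_P3_1, pd_P3_0]; simp [P3]
    · intro x; show pd 1 (pd 1 (comp u 1)) x = 0
      rw [hc1, pd_P3_1, pd_P3_1]; simp [P3]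
    · intro x; show pd 0 (pd 0 (comp u 1)) x = 0
      rw [hc1, pd_P3_0, pd_P3_0]; simp [P3]
    · intro x; show pd 2 (pd 2 (comp u 1)) x = 0
      rw [hc1, pd_P3_2, pd_P3_2]; simp [P3]
    · intro x; show pd 0 (pd 2 (comp u 0)) x + pd 1 (pd 2 (comp u 1)) x = 0
      rw [hc0, hc1, pd_P3_2, pd_P3_2, pd_P3_0, pd_P3_1]; simp [P3]
    · intro x; show pd 0 (pd 2 (comp u 2)) x = 0
      rw [hpd2f2, pd_const]
    · intro x; show pd 1 (pd 2 (comp u 2)) x = 0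
      rw [hpd2f2, pd_const]
    · intro x; show pd 2 (pd 2 (comp u 2)) x = 0
      rw [hpd2f2, pd_const]
    · intro x; show pd 0 (pd 0 (comp u 2)) x + pd 1 (pd 1 (comp u 2)) x = 0
      rw [hpd0f2, hpd1f2,
        pd_add (differentiable_const _) hd20 0,
        pd_add (differentiable_const _) hd21 1,
        pd_const, pd_const,
        pd_pi32 ((contDiff_pd2 hg 0).differentiable topp1) 0 0 pi32_single0,
        pd_pi32 ((contDiff_pd2 hg 1).differentiable topp1) 1 1 pi32_single1]
      simpa using hharm (pi32 x)
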